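/- arXiv:math-ph/0103039 — 5 statements merged into one kernel-verified Lean document; each statement's English description precedes it below -/
import Mathlib

section
/- Let κ be a Markov kernel on a measurable space X. Assume: (a) there exist a measurable set K, a constant δ > 0 and a probability measure ν* on X such that κ(x, A) ≥ δ·ν*(A) for every x ∈ K and every measurable set A; (b) there exists δ' > 0 such that κ(x, K) ≥ δ' for every x ∈ X. Then for every probability measure μ on X and every measurable set A one has (P*²μ)(A) ≥ δδ'·ν*(A). -/
open MeasureTheory ProbabilityTheory
open scoped ENNReal NNReal

namespace MeasureTheory.Measure

variable {X Y : Type*} [MeasurableSpace X] [MeasurableSpace Y]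

theorem le_bind_apply_of_le (κ : Kernel X Y) (μ : Measure X) [IsProbabilityMeasure μ]
    {s : Set Y} (hs : MeasurableSet s) {c : ℝ≥0∞} (hc : ∀ x, c ≤ κ x s) :
    c ≤ (μ.bind κ) s := by
  rw [bind_apply hs κ.measurable.aemeasurable]
  calc c = ∫⁻ _, c ∂μ := by simp
    _ ≤ ∫⁻ x, κ x s ∂μ := lintegral_mono hc

theorem mul_measure_le_bind_apply_of_le_on (κ : Kernel X Y) (μ : Measure X)
    {K : Set X} {A : Set Y} (hA : MeasurableSet A) {c : ℝ≥0∞}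
    (hc : ∀ x ∈ K, c ≤ κ x A) :
    c * μ K ≤ (μ.bind κ) A := by
  rw [bind_apply hA κ.measurable.aemeasurable]
  calc c * μ K = ∫⁻ _ in K, c ∂μ := by rw [setLIntegral_const]
    _ ≤ ∫⁻ x in K, κ x A ∂μ := setLIntegral_mono (κ.measurable_coe hA) hc
    _ ≤ ∫⁻ x, κ x A ∂μ := setLIntegral_le_lintegral _ _

end MeasureTheory.Measure

theorem doeblin_two_step_lower_bound_general
    {X : Type*} [MeasurableSpace X] (κ : Kernel X X)
    (K : Set X) (hK : MeasurableSet K)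
    (δ : ℝ≥0∞) (νstar : Measure X)
    (ha : ∀ x ∈ K, ∀ A : Set X, MeasurableSet A → δ * νstar A ≤ κ x A)
    (δ' : ℝ≥0∞)
    (hb : ∀ x : X, δ' ≤ κ x K)
    (μ : Measure X) [IsProbabilityMeasure μ]
    (A : Set X) (hA : MeasurableSet A) :
    δ * δ' * νstar A ≤ ((μ.bind κ).bind κ) A := by
  have hK_mass : δ' ≤ (μ.bind κ) K := Measure.le_bind_apply_of_le κ μ hK hb
  calc δ * δ' * νstar A = δ * νstar A * δ' := by ring
    _ ≤ δ * νstar A * (μ.bind κ) K := by gcongr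
    _ ≤ ((μ.bind κ).bind κ) A :=
      Measure.mul_measure_le_bind_apply_of_le_on κ _ hA fun x hx => ha x hx A hA

theorem doeblin_two_step_lower_bound
    {X : Type*} [MeasurableSpace X] (κ : Kernel X X) [IsMarkovKernel κ]
    (K : Set X) (hK : MeasurableSet K)
    (δ : ℝ≥0∞) (hδ : 0 < δ) (νstar : Measure X) [IsProbabilityMeasure νstar]
    (ha : ∀ x ∈ K, ∀ A : Set X, MeasurableSet A → δ * νstar A ≤ κ x A)
    (δ' : ℝ≥0∞) (hδ' : 0 < δ')
    (hb : ∀ x : X, δ' ≤ κ x K)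
    (μ : Measure X) [IsProbabilityMeasure μ]
    (A : Set X) (hA : MeasurableSet A) :
    δ * δ' * νstar A ≤ ((μ.bind κ).bind κ) A :=
  doeblin_two_step_lower_bound_general κ K hK δ νstar ha δ' hb μ A hA
end

section
/- Let κ be a Markov kernel on a measurable space X. Assume: (a) there exist a measurable set K, a constant δ > 0 and a probability measure ν* on X such that κ(x, A) ≥ δ·ν*(A) for every x ∈ K and every measurable set A; (b) there exists δ' > 0 such that κ(x, K) ≥ δ' for every x ∈ X. Then for any two probability measures μ and ν on X and every natural number n one has ‖P*^(2n)μ − P*^(2n)ν‖_TV ≤ (1 − δδ')ⁿ·‖μ − ν‖_TV. -/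
open MeasureTheory ProbabilityTheory
open scoped ENNReal NNReal

/-- The total variation norm of the difference of two finite measures:
`‖μ - ν‖_TV = (μ-ν)₊(X) + (μ-ν)₋(X)` where `(μ-ν)₊`, `(μ-ν)₋` is the Jordan
decomposition of the signed measure `μ - ν`. -/
noncomputable def tvNorm {X : Type*} [MeasurableSpace X] (μ ν : Measure X)
    [IsFiniteMeasure μ] [IsFiniteMeasure ν] : ℝ≥0∞ :=
  (μ.toSignedMeasure - ν.toSignedMeasure).totalVariation Set.univ

instance bind_isProbabilityMeasure {X : Type*} [MeasurableSpace X]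
    (κ : Kernel X X) [IsMarkovKernel κ] (μ : Measure X) [IsProbabilityMeasure μ] :
    IsProbabilityMeasure (μ.bind κ) := by
  constructor
  rw [Measure.bind_apply MeasurableSet.univ (Kernel.measurable κ).aemeasurable]
  simp

instance iterate_bind_isProbabilityMeasure {X : Type*} [MeasurableSpace X]
    (κ : Kernel X X) [IsMarkovKernel κ] (μ : Measure X) [IsProbabilityMeasure μ] (n : ℕ) :
    IsProbabilityMeasure ((fun m : Measure X => m.bind κ)^[n] μ) := by
  induction n with
  | zero => simpa
  | succ n ih => rw [Function.iterate_succ_apply']; exact bind_isProbabilityMeasure κ _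

/-!
In terms of the truncated differences of measures, `‖μ - ν‖_TV = (μ - ν)(X) + (ν - μ)(X)`, and
any identity `a + q = b + p` bounds `‖a - b‖_TV` by `p(X) + q(X)`. If a Markov kernel `η`
satisfies `η x ≥ ε ρ` for every `x`, push the identity `μ + (ν - μ) = ν + (μ - ν)` through `η`:
both `η ∘ₘ (μ - ν)` and `η ∘ₘ (ν - μ)` dominate the same measure `ε m ρ`, where
`m = (μ - ν)(X) = (ν - μ)(X)`, and cancelling it contracts the distance by `1 - ε`.
The two-step kernel `κ ∘ₖ κ` satisfies this with `ε = δ δ'`: the first step lands in `K` with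
probability at least `δ'`, and from `K` the second step dominates `δ ν*`.
-/

open Set

namespace MeasureTheory.Measure

variable {X : Type*} [MeasurableSpace X]

lemma add_right_cancel_of_isFiniteMeasure {μ ν ξ : Measure X} [IsFiniteMeasure ξ]
    (h : μ + ξ = ν + ξ) : μ = ν := by
  rw [← Measure.add_sub_cancel (μ := μ) (ν := ξ), h, Measure.add_sub_cancel]

lemma add_sub_eq_add_sub_swap (μ ν : Measure X) [IsFiniteMeasure μ] [IsFiniteMeasure ν] :
    μ + (ν - μ) = ν + (μ - ν) := by
  rw [← toSignedMeasure_eq_toSignedMeasure_iff, toSignedMeasure_add, toSignedMeasure_add,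
    add_comm ν.toSignedMeasure, ← sub_eq_sub_iff_add_eq_add]
  exact sub_toSignedMeasure_eq_toSignedMeasure_sub

lemma sub_apply_univ_comm {μ ν : Measure X} [IsFiniteMeasure μ] [IsFiniteMeasure ν]
    (h : μ univ = ν univ) : (μ - ν) univ = (ν - μ) univ := by
  have := congrArg (· univ) (add_sub_eq_add_sub_swap μ ν)
  simp only [add_apply, h] at this
  exact ((ENNReal.add_right_inj (measure_ne_top ν univ)).mp this).symm

end MeasureTheory.Measure

section TotalVariation

variable {X : Type*} [MeasurableSpace X]

lemma tvNorm_eq_sub_add_sub (μ ν : Measure X) [IsFiniteMeasure μ] [IsFiniteMeasure ν] :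
    tvNorm μ ν = (μ - ν) univ + (ν - μ) univ := by
  rw [tvNorm, SignedMeasure.totalVariation, Measure.toJordanDecomposition_toSignedMeasure_sub,
    Measure.add_apply]
  rfl

lemma tvNorm_eq_two_mul_sub {μ ν : Measure X} [IsFiniteMeasure μ] [IsFiniteMeasure ν]
    (h : μ univ = ν univ) : tvNorm μ ν = 2 * (μ - ν) univ := by
  rw [tvNorm_eq_sub_add_sub, ← Measure.sub_apply_univ_comm h, two_mul]

lemma tvNorm_le_of_add_eq_add {μ ν p q : Measure X} [IsFiniteMeasure μ] [IsFiniteMeasure ν]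
    (h : μ + q = ν + p) : tvNorm μ ν ≤ p univ + q univ := by
  have hμ : μ - ν ≤ p := Measure.sub_le_of_le_add <| by
    rw [add_comm p, ← h]; exact Measure.le_add_right le_rfl
  have hν : ν - μ ≤ q := Measure.sub_le_of_le_add <| by
    rw [add_comm q, h]; exact Measure.le_add_right le_rfl
  rw [tvNorm_eq_sub_add_sub]
  exact add_le_add (hμ univ) (hν univ)

lemma tvNorm_le_of_add_eq_add_of_le {μ ν p q c : Measure X} [IsFiniteMeasure μ]
    [IsFiniteMeasure ν] [IsFiniteMeasure c] (h : μ + q = ν + p) (hp : c ≤ p) (hq : c ≤ q) :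
    tvNorm μ ν ≤ (p univ - c univ) + (q univ - c univ) := by
  have h' : μ + (q - c) = ν + (p - c) := Measure.add_right_cancel_of_isFiniteMeasure <| by
    rwa [add_assoc, add_assoc, Measure.sub_add_cancel_of_le hp, Measure.sub_add_cancel_of_le hq]
  calc tvNorm μ ν ≤ (p - c) univ + (q - c) univ := tvNorm_le_of_add_eq_add h'
    _ = (p univ - c univ) + (q univ - c univ) := by
      rw [Measure.sub_apply .univ hp, Measure.sub_apply .univ hq]

end TotalVariation

section Minorization

variable {α β γ : Type*} [MeasurableSpace α] [MeasurableSpace β] [MeasurableSpace γ]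

lemma smul_le_comp_of_forall_smul_le {η : Kernel α β} {ρ : Measure β} {ε : ℝ≥0∞}
    (h : ∀ a, ε • ρ ≤ η a) (μ : Measure α) : (ε * μ univ) • ρ ≤ η ∘ₘ μ := by
  refine Measure.le_iff.2 fun A hA => ?_
  rw [Measure.bind_apply hA η.aemeasurable]
  calc ((ε * μ univ) • ρ) A = ∫⁻ _, (ε • ρ) A ∂μ := by
        simp only [Measure.smul_apply, smul_eq_mul, lintegral_const]; ring
    _ ≤ ∫⁻ a, η a A ∂μ := lintegral_mono fun a => h a A

lemma tvNorm_comp_le_of_forall_smul_le {η : Kernel α β} [IsMarkovKernel η] {ρ : Measure β}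
    [IsProbabilityMeasure ρ] {ε : ℝ≥0∞} (h : ∀ a, ε • ρ ≤ η a)
    (μ ν : Measure α) [IsProbabilityMeasure μ] [IsProbabilityMeasure ν] :
    tvNorm (η ∘ₘ μ) (η ∘ₘ ν) ≤ (1 - ε) * tvNorm μ ν := by
  have hmass : μ univ = ν univ := by simp
  set m := (μ - ν) univ
  have hm : (ν - μ) univ = m := (Measure.sub_apply_univ_comm hmass).symm
  have hsplit : η ∘ₘ μ + η ∘ₘ (ν - μ) = η ∘ₘ ν + η ∘ₘ (μ - ν) := by
    rw [← Measure.comp_add, ← Measure.comp_add, Measure.add_sub_eq_add_sub_swap]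
  have hp := smul_le_comp_of_forall_smul_le h (μ - ν)
  have hq := smul_le_comp_of_forall_smul_le h (ν - μ)
  rw [hm] at hq
  have := isFiniteMeasure_of_le _ hp
  calc tvNorm (η ∘ₘ μ) (η ∘ₘ ν)
      ≤ ((η ∘ₘ (μ - ν)) univ - ((ε * m) • ρ) univ)
        + ((η ∘ₘ (ν - μ)) univ - ((ε * m) • ρ) univ) :=
        tvNorm_le_of_add_eq_add_of_le hsplit hp hq
    _ = (1 - ε) * m + (1 - ε) * m := by
      simp only [Measure.comp_apply_univ, hm, Measure.smul_apply, measure_univ, smul_eq_mul,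
        mul_one, ENNReal.sub_mul fun _ _ => measure_ne_top (μ - ν) univ, one_mul, m]
    _ = (1 - ε) * tvNorm μ ν := by rw [tvNorm_eq_two_mul_sub hmass, two_mul, mul_add]

lemma smul_le_comp_apply_of_forall_smul_le {κ : Kernel α β} {η : Kernel β γ} {K : Set β}
    {ρ : Measure γ} {δ δ' : ℝ≥0∞} (hη : ∀ y ∈ K, δ • ρ ≤ η y) (hκ : ∀ x, δ' ≤ κ x K) (x : α) :
    (δ * δ') • ρ ≤ (η ∘ₖ κ) x := by
  refine Measure.le_iff.2 fun A hA => ?_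
  rw [Kernel.comp_apply' _ _ _ hA]
  calc ((δ * δ') • ρ) A = (δ • ρ) A * δ' := by
        simp only [Measure.smul_apply, smul_eq_mul]; ring
    _ ≤ (δ • ρ) A * κ x K := by gcongr; exact hκ x
    _ = ∫⁻ _ in K, (δ • ρ) A ∂κ x := (setLIntegral_const K _).symm
    _ ≤ ∫⁻ y in K, η y A ∂κ x := setLIntegral_mono (η.measurable_coe hA) fun y hy => hη y hy A
    _ ≤ ∫⁻ y, η y A ∂κ x := setLIntegral_le_lintegral _ _

end Minorization

section Iteration

variable {X : Type*} [MeasurableSpace X]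

lemma tvNorm_iterate_comp_le_of_forall_smul_le {η : Kernel X X} [IsMarkovKernel η]
    {ρ : Measure X} [IsProbabilityMeasure ρ] {ε : ℝ≥0∞} (h : ∀ a, ε • ρ ≤ η a)
    (μ ν : Measure X) [IsProbabilityMeasure μ] [IsProbabilityMeasure ν] (n : ℕ) :
    tvNorm ((η ∘ₘ ·)^[n] μ) ((η ∘ₘ ·)^[n] ν) ≤ (1 - ε) ^ n * tvNorm μ ν := by
  induction n with
  | zero => simp
  | succ n ih =>
    simp only [Function.iterate_succ_apply']
    calc _ ≤ (1 - ε) * tvNorm ((η ∘ₘ ·)^[n] μ) ((η ∘ₘ ·)^[n] ν) :=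
          tvNorm_comp_le_of_forall_smul_le h _ _
      _ ≤ (1 - ε) * ((1 - ε) ^ n * tvNorm μ ν) := by gcongr
      _ = (1 - ε) ^ (n + 1) * tvNorm μ ν := by ring

lemma iterate_two_mul_comp (κ : Kernel X X) (n : ℕ) :
    (κ ∘ₘ ·)^[2 * n] = ((κ ∘ₖ κ) ∘ₘ ·)^[n] := by
  rw [Function.iterate_mul]
  congr 1
  funext μ
  simp only [Function.iterate_succ, Function.iterate_zero, Function.comp_apply, id,
    Measure.comp_assoc]

end Iteration

theorem doeblin_iterated_tv_contraction_general
    {X : Type*} [MeasurableSpace X] (κ : Kernel X X) [IsMarkovKernel κ]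
    (K : Set X)
    (δ : ℝ≥0∞) (νstar : Measure X) [IsProbabilityMeasure νstar]
    (ha : ∀ x ∈ K, ∀ A : Set X, MeasurableSet A → δ * νstar A ≤ κ x A)
    (δ' : ℝ≥0∞)
    (hb : ∀ x : X, δ' ≤ κ x K)
    (μ ν : Measure X) [IsProbabilityMeasure μ] [IsProbabilityMeasure ν] (n : ℕ) :
    tvNorm ((fun m : Measure X => m.bind κ)^[2 * n] μ)
        ((fun m : Measure X => m.bind κ)^[2 * n] ν)
      ≤ (1 - δ * δ') ^ n * tvNorm μ ν := by
  have hminor : ∀ x, (δ * δ') • νstar ≤ (κ ∘ₖ κ) x :=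
    smul_le_comp_apply_of_forall_smul_le
      (fun x hx => Measure.le_iff.2 fun A hA => by simpa using ha x hx A hA) hb
  simp only [iterate_two_mul_comp]
  exact tvNorm_iterate_comp_le_of_forall_smul_le hminor μ ν n

theorem doeblin_iterated_tv_contraction
    {X : Type*} [MeasurableSpace X] (κ : Kernel X X) [IsMarkovKernel κ]
    (K : Set X) (hK : MeasurableSet K)
    (δ : ℝ≥0∞) (hδ : 0 < δ) (νstar : Measure X) [IsProbabilityMeasure νstar]
    (ha : ∀ x ∈ K, ∀ A : Set X, MeasurableSet A → δ * νstar A ≤ κ x A)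
    (δ' : ℝ≥0∞) (hδ' : 0 < δ')
    (hb : ∀ x : X, δ' ≤ κ x K)
    (μ ν : Measure X) [IsProbabilityMeasure μ] [IsProbabilityMeasure ν] (n : ℕ) :
    tvNorm ((fun m : Measure X => m.bind κ)^[2 * n] μ)
        ((fun m : Measure X => m.bind κ)^[2 * n] ν)
      ≤ (1 - δ * δ') ^ n * tvNorm μ ν :=
  doeblin_iterated_tv_contraction_general κ K δ νstar ha δ' hb μ ν n
end

section
/- Let κ be a Markov kernel on a measurable space X. Assume: (a) there exist a measurable set K, a constant δ > 0 and a probability measure ν* on X such that κ(x, A) ≥ δ·ν*(A) for every x ∈ K and every measurable set A; (b) there exists δ' > 0 such that κ(x, K) ≥ δ' for every x ∈ X. Then κ has at most one invariant probability measure, i.e. if μ and ν are probability measures with P*μ = μ and P*ν = ν, then μ = ν. -/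
open MeasureTheory ProbabilityTheory
open scoped ENNReal NNReal

/-!
Composing κ with itself turns the local minorization on `K` into a global one:
`(κ ∘ₖ κ) x ≥ κ x K • δ • ν* ≥ δ' • δ • ν*` for every `x`. For a Markov kernel with a global
minorant `m ≠ 0`, the common part `ρ = μ ⊓ ν` of two invariant probability measures is again
invariant, hence so are the remainders `μ - ρ` and `ν - ρ`; each invariant measure dominates its
mass times `m`, so `ρ + (1 - ρ univ) • m ≤ μ ⊓ ν = ρ`. This forces `ρ univ = 1`, i.e. `μ = ρ = ν`.
-/

namespace MeasureTheory.Measure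

variable {α β : Type*} {mα : MeasurableSpace α} {mβ : MeasurableSpace β}
  {μ ν : Measure α} {κ η : Kernel α β}

lemma comp_mono_right (hμν : μ ≤ ν) : κ ∘ₘ μ ≤ κ ∘ₘ ν :=
  le_iff.2 fun s hs => by
    rw [bind_apply hs κ.aemeasurable, bind_apply hs κ.aemeasurable]
    exact lintegral_mono' hμν le_rfl

lemma comp_mono_left (hκη : ∀ a, κ a ≤ η a) : κ ∘ₘ μ ≤ η ∘ₘ μ :=
  le_iff.2 fun s hs => by
    rw [bind_apply hs κ.aemeasurable, bind_apply hs η.aemeasurable]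
    exact lintegral_mono fun a => hκη a s

lemma smul_le_comp_of_le_on {K : Set α} {m : Measure β} (hm : ∀ a ∈ K, m ≤ κ a) :
    μ K • m ≤ κ ∘ₘ μ :=
  le_iff.2 fun s hs => by
    rw [bind_apply hs κ.aemeasurable, smul_apply, smul_eq_mul, mul_comm, ← setLIntegral_const]
    exact (setLIntegral_mono (κ.measurable_coe hs) fun a ha => hm a ha s).trans
      (setLIntegral_le_lintegral _ _)

end MeasureTheory.Measure

namespace ProbabilityTheory.Kernel

variable {X : Type*} [MeasurableSpace X] {κ : Kernel X X} {μ ν ρ m : Measure X}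

lemma Invariant.inf [IsMarkovKernel κ] [IsFiniteMeasure μ] (hμ : κ.Invariant μ)
    (hν : κ.Invariant ν) : κ.Invariant (μ ⊓ ν) := by
  have : IsFiniteMeasure (μ ⊓ ν) := isFiniteMeasure_of_le μ inf_le_left
  refine Measure.eq_of_le_of_measure_univ_eq ?_ Measure.comp_apply_univ
  exact le_inf ((Measure.comp_mono_right inf_le_left).trans_eq hμ.def)
    ((Measure.comp_mono_right inf_le_right).trans_eq hν.def)

lemma Invariant.sub [IsFiniteMeasure ρ] (hρμ : ρ ≤ μ) (hμ : κ.Invariant μ)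
    (hρ : κ.Invariant ρ) : κ.Invariant (μ - ρ) := by
  have h : ρ + κ ∘ₘ (μ - ρ) = ρ + (μ - ρ) :=
    calc ρ + κ ∘ₘ (μ - ρ) = κ ∘ₘ (ρ + (μ - ρ)) := by rw [Measure.comp_add, hρ.def]
      _ = ρ + (μ - ρ) := by rw [add_comm ρ, Measure.sub_add_cancel_of_le hρμ, hμ.def]
  exact le_antisymm (Measure.le_of_add_le_add_left h.le) (Measure.le_of_add_le_add_left h.ge)

lemma Invariant.smul_le (hm : ∀ x, m ≤ κ x) (hμ : κ.Invariant μ) : μ Set.univ • m ≤ μ :=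
  calc μ Set.univ • m = const X m ∘ₘ μ := Measure.const_comp.symm
    _ ≤ κ ∘ₘ μ := Measure.comp_mono_left hm
    _ = μ := hμ.def

lemma Invariant.add_smul_le [IsFiniteMeasure μ] [IsFiniteMeasure ρ] (hm : ∀ x, m ≤ κ x)
    (hρμ : ρ ≤ μ) (hμ : κ.Invariant μ) (hρ : κ.Invariant ρ) :
    ρ + (μ Set.univ - ρ Set.univ) • m ≤ μ := by
  have h := (hμ.sub hρμ hρ).smul_le hm
  rw [Measure.sub_apply .univ hρμ] at h
  calc ρ + (μ Set.univ - ρ Set.univ) • m ≤ ρ + (μ - ρ) := add_le_add le_rfl h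
    _ = μ := by rw [add_comm, Measure.sub_add_cancel_of_le hρμ]

lemma Invariant.eq_of_forall_le [IsMarkovKernel κ] [IsProbabilityMeasure μ]
    [IsProbabilityMeasure ν] (hm0 : m ≠ 0) (hm : ∀ x, m ≤ κ x) (hμ : κ.Invariant μ)
    (hν : κ.Invariant ν) : μ = ν := by
  set ρ := μ ⊓ ν
  have : IsFiniteMeasure ρ := isFiniteMeasure_of_le μ inf_le_left
  have hρ : κ.Invariant ρ := hμ.inf hν
  have hle : ρ + (1 - ρ Set.univ) • m ≤ ρ + 0 := by
    rw [add_zero]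
    refine le_inf ?_ ?_
    · simpa using hμ.add_smul_le hm inf_le_left hρ
    · simpa using hν.add_smul_le hm inf_le_right hρ
  have hdeficit : (1 - ρ Set.univ) • m = 0 := le_bot_iff.1 (Measure.le_of_add_le_add_left hle)
  have hρ_univ : ρ Set.univ = 1 := by
    refine le_antisymm ?_ ?_
    · simpa using (inf_le_left : ρ ≤ μ) Set.univ
    · simpa [hm0, tsub_eq_zero_iff_le] using hdeficit
  have hρμ : ρ = μ := Measure.eq_of_le_of_measure_univ_eq inf_le_left (by simp [hρ_univ])
  have hρν : ρ = ν := Measure.eq_of_le_of_measure_univ_eq inf_le_right (by simp [hρ_univ])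
  rw [← hρμ, hρν]

end ProbabilityTheory.Kernel

theorem doeblin_unique_invariant_measure_general
    {X : Type*} [MeasurableSpace X] (κ : Kernel X X) [IsMarkovKernel κ]
    (K : Set X)
    (δ : ℝ≥0∞) (hδ : 0 < δ) (νstar : Measure X) [IsProbabilityMeasure νstar]
    (ha : ∀ x ∈ K, ∀ A : Set X, MeasurableSet A → δ * νstar A ≤ κ x A)
    (δ' : ℝ≥0∞) (hδ' : 0 < δ')
    (hb : ∀ x : X, δ' ≤ κ x K)
    (μ ν : Measure X) [IsProbabilityMeasure μ] [IsProbabilityMeasure ν]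
    (hμ : μ.bind κ = μ) (hν : ν.bind κ = ν) :
    μ = ν := by
  have hminK : ∀ x ∈ K, δ • νstar ≤ κ x := fun x hx => Measure.le_iff.2 (ha x hx)
  have hmin : ∀ x, δ' • δ • νstar ≤ (κ ∘ₖ κ) x := fun x => by
    rw [Kernel.comp_apply]
    exact (IsOrderedSMul.smul_le_smul_right _ _ (hb x) _).trans (Measure.smul_le_comp_of_le_on hminK)
  have hμ : κ.Invariant μ := hμ
  have hν : κ.Invariant ν := hν
  have hmin_ne : δ' • δ • νstar ≠ 0 := by
    simp [hδ.ne', hδ'.ne', IsProbabilityMeasure.ne_zero]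
  exact Kernel.Invariant.eq_of_forall_le hmin_ne hmin (hμ.comp hμ) (hν.comp hν)

theorem doeblin_unique_invariant_measure
    {X : Type*} [MeasurableSpace X] (κ : Kernel X X) [IsMarkovKernel κ]
    (K : Set X) (hK : MeasurableSet K)
    (δ : ℝ≥0∞) (hδ : 0 < δ) (νstar : Measure X) [IsProbabilityMeasure νstar]
    (ha : ∀ x ∈ K, ∀ A : Set X, MeasurableSet A → δ * νstar A ≤ κ x A)
    (δ' : ℝ≥0∞) (hδ' : 0 < δ')
    (hb : ∀ x : X, δ' ≤ κ x K)
    (μ ν : Measure X) [IsProbabilityMeasure μ] [IsProbabilityMeasure ν]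
    (hμ : μ.bind κ = μ) (hν : ν.bind κ = ν) :
    μ = ν :=
  doeblin_unique_invariant_measure_general κ K δ hδ νstar ha δ' hδ' hb μ ν hμ hν
end

section
/- Let κ be a Markov kernel on a measurable space X. Assume: (a) there exist a measurable set K, a constant δ > 0 and a probability measure ν* on X such that κ(x, A) ≥ δ·ν*(A) for every x ∈ K and every measurable set A; (b) there exists δ' > 0 such that κ(x, K) ≥ δ' for every x ∈ X. Then κ has a unique invariant probability measure μ*, and for every probability measure μ on X and every natural number n one has ‖P*ⁿμ − μ*‖_TV ≤ 2·(1 − δδ')^⌊n/2⌋. -/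
open MeasureTheory ProbabilityTheory
open scoped ENNReal NNReal

/-!
By (a) and (b), the two-step kernel `κ ∘ₖ κ` satisfies the uniform Doeblin minorization
`(κ ∘ₖ κ) x ≥ δδ' • ν*` for every `x`. Writing `(κ ∘ₖ κ) ∘ₘ m = R m + δδ' m(X) • ν*`, two measures
of equal mass lose the same multiple of `ν*`, so the two-step operator contracts their total
variation distance by `1 - δδ'`; this gives uniqueness and, after splitting
`n = 2 ⌊n/2⌋ + n % 2` and bounding the last distance by `2`, the rate. The invariant measure is
`δδ' ∑ₙ Rⁿ ν*` (the chain regenerates from `ν*` at geometric times).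
-/

section

variable {X : Type*} [MeasurableSpace X]

section TotalVariation

variable {μ ν p q : Measure X} [IsFiniteMeasure μ] [IsFiniteMeasure ν]
  [IsFiniteMeasure p] [IsFiniteMeasure q]

lemma tvNorm_eq_variation :
    tvNorm μ ν = (μ.toSignedMeasure - ν.toSignedMeasure).variation Set.univ := by
  rw [tvNorm, SignedMeasure.totalVariation_eq_variation]

lemma tvNorm_le_measure_univ_add : tvNorm μ ν ≤ μ Set.univ + ν Set.univ := by
  rw [tvNorm_eq_variation]
  simpa using VectorMeasure.variation_sub_le (μ := μ.toSignedMeasure)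
    (ν := ν.toSignedMeasure) Set.univ

lemma tvNorm_le_two (μ ν : Measure X) [IsProbabilityMeasure μ] [IsProbabilityMeasure ν] :
    tvNorm μ ν ≤ 2 := by
  simpa [one_add_one_eq_two] using tvNorm_le_measure_univ_add (μ := μ) (ν := ν)

lemma eq_of_tvNorm_eq_zero (h : tvNorm μ ν = 0) : μ = ν := by
  rw [tvNorm_eq_variation, Measure.measure_univ_eq_zero, VectorMeasure.variation_eq_zero,
    sub_eq_zero] at h
  exact Measure.toSignedMeasure_eq_toSignedMeasure_iff.mp h

lemma tvNorm_eq_of_add_eq (h : μ + q = ν + p) : tvNorm μ ν = tvNorm p q := by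
  have h' := Measure.toSignedMeasure_congr h
  rw [Measure.toSignedMeasure_add, Measure.toSignedMeasure_add] at h'
  rw [tvNorm, tvNorm, sub_eq_sub_iff_add_eq_add.mpr (h'.trans (add_comm _ _))]

lemma exists_add_eq_add_and_tvNorm_eq (μ ν : Measure X) [IsFiniteMeasure μ] [IsFiniteMeasure ν] :
    ∃ p q : Measure X, IsFiniteMeasure p ∧ IsFiniteMeasure q ∧
      μ + q = ν + p ∧ tvNorm μ ν = p Set.univ + q Set.univ := by
  set j := (μ.toSignedMeasure - ν.toSignedMeasure).toJordanDecomposition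
  refine ⟨j.posPart, j.negPart, inferInstance, inferInstance, ?_, rfl⟩
  have hj : j.posPart.toSignedMeasure - j.negPart.toSignedMeasure
      = μ.toSignedMeasure - ν.toSignedMeasure :=
    SignedMeasure.toSignedMeasure_toJordanDecomposition _
  refine Measure.toSignedMeasure_eq_toSignedMeasure_iff.mp ?_
  rw [Measure.toSignedMeasure_add, Measure.toSignedMeasure_add]
  linear_combination (norm := abel) -hj

end TotalVariation

section Doeblin

variable {η : Kernel X X} {ε : ℝ≥0∞} {ν : Measure X}

lemma smul_le_comp_of_forall_smul_le_apply (hη : ∀ x, ε • ν ≤ η x) (m : Measure X) :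
    (ε * m Set.univ) • ν ≤ η ∘ₘ m := by
  refine Measure.le_iff.mpr fun A hA => ?_
  calc ((ε * m Set.univ) • ν) A = ∫⁻ _, ε * ν A ∂m := by
        rw [lintegral_const, Measure.smul_apply, smul_eq_mul]; ring
    _ ≤ ∫⁻ x, η x A ∂m := lintegral_mono fun x => by simpa using Measure.le_iff.mp (hη x) A hA
    _ = (η ∘ₘ m) A := (Measure.bind_apply hA η.aemeasurable).symm

variable [IsMarkovKernel η]

lemma le_one_of_forall_smul_le_apply [IsProbabilityMeasure ν] (hη : ∀ x, ε • ν ≤ η x) :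
    ε ≤ 1 := by
  obtain ⟨x⟩ := nonempty_of_isProbabilityMeasure ν
  simpa using Measure.le_iff'.mp (hη x) Set.univ

variable (η ε ν) in
noncomputable def doeblinResidual (m : Measure X) : Measure X :=
  η ∘ₘ m - (ε * m Set.univ) • ν

instance (m : Measure X) [IsFiniteMeasure m] : IsFiniteMeasure (doeblinResidual η ε ν m) :=
  Measure.isFiniteMeasure_sub

instance (m : Measure X) [IsFiniteMeasure m] (n : ℕ) :
    IsFiniteMeasure ((doeblinResidual η ε ν)^[n] m) := by
  induction n with
  | zero => assumption
  | succ n ih => rw [Function.iterate_succ_apply']; infer_instance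

lemma comp_eq_doeblinResidual_add (hη : ∀ x, ε • ν ≤ η x) (m : Measure X) [IsFiniteMeasure m] :
    η ∘ₘ m = doeblinResidual η ε ν m + (ε * m Set.univ) • ν :=
  have := isFiniteMeasure_of_le _ (smul_le_comp_of_forall_smul_le_apply hη m)
  (Measure.sub_add_cancel_of_le (smul_le_comp_of_forall_smul_le_apply hη m)).symm

lemma doeblinResidual_apply_univ [IsProbabilityMeasure ν] (hη : ∀ x, ε • ν ≤ η x)
    (m : Measure X) [IsFiniteMeasure m] :
    doeblinResidual η ε ν m Set.univ = (1 - ε) * m Set.univ := by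
  have h := congrArg (· Set.univ) (comp_eq_doeblinResidual_add hη m)
  simp only [Measure.comp_apply_univ, Measure.add_apply, Measure.smul_apply, measure_univ,
    smul_eq_mul, mul_one] at h
  have hfin : ε * m Set.univ ≠ ∞ :=
    ENNReal.mul_ne_top (ne_top_of_le_ne_top ENNReal.one_ne_top (le_one_of_forall_smul_le_apply hη))
      (measure_ne_top m _)
  rw [ENNReal.eq_sub_of_add_eq hfin h.symm, ENNReal.sub_mul fun _ _ => measure_ne_top m _, one_mul]

lemma tvNorm_comp_le [IsProbabilityMeasure ν] (hη : ∀ x, ε • ν ≤ η x) (μ μ' : Measure X)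
    [IsFiniteMeasure μ] [IsFiniteMeasure μ'] (hmass : μ Set.univ = μ' Set.univ) :
    tvNorm (η ∘ₘ μ) (η ∘ₘ μ') ≤ (1 - ε) * tvNorm μ μ' := by
  obtain ⟨p, q, _, _, hadd, htv⟩ := exists_add_eq_add_and_tvNorm_eq μ μ'
  have hpq : q Set.univ = p Set.univ := by
    have := congrArg (· Set.univ) hadd
    simp only [Measure.add_apply, hmass] at this
    exact WithTop.add_left_cancel (measure_ne_top μ' _) this
  -- `p` and `q` lose the same mass `ε * p univ` to `ν`, so only their residuals remain.
  have hres : η ∘ₘ μ + doeblinResidual η ε ν q = η ∘ₘ μ' + doeblinResidual η ε ν p := by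
    have h := congrArg (η ∘ₘ ·) hadd
    simp only [Measure.comp_add] at h
    have := isFiniteMeasure_of_le _ (smul_le_comp_of_forall_smul_le_apply hη p)
    rwa [comp_eq_doeblinResidual_add hη q, comp_eq_doeblinResidual_add hη p, hpq, ← add_assoc,
      ← add_assoc, Measure.add_left_inj] at h
  calc tvNorm (η ∘ₘ μ) (η ∘ₘ μ')
      = tvNorm (doeblinResidual η ε ν p) (doeblinResidual η ε ν q) := tvNorm_eq_of_add_eq hres
    _ ≤ doeblinResidual η ε ν p Set.univ + doeblinResidual η ε ν q Set.univ :=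
      tvNorm_le_measure_univ_add
    _ = (1 - ε) * tvNorm μ μ' := by
      rw [doeblinResidual_apply_univ hη, doeblinResidual_apply_univ hη, htv, hpq, mul_add]

variable [IsProbabilityMeasure ν]

lemma tvNorm_iterate_comp_le (hη : ∀ x, ε • ν ≤ η x) (k : ℕ) (μ μ' : Measure X)
    [IsProbabilityMeasure μ] [IsProbabilityMeasure μ'] :
    tvNorm ((η ∘ₘ ·)^[k] μ) ((η ∘ₘ ·)^[k] μ') ≤ (1 - ε) ^ k * tvNorm μ μ' := by
  induction k with
  | zero => simp
  | succ k ih =>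
    simp only [Function.iterate_succ_apply']
    calc _ ≤ (1 - ε) * tvNorm ((η ∘ₘ ·)^[k] μ) ((η ∘ₘ ·)^[k] μ') :=
          tvNorm_comp_le hη _ _ (by simp)
      _ ≤ (1 - ε) * ((1 - ε) ^ k * tvNorm μ μ') := by gcongr
      _ = (1 - ε) ^ (k + 1) * tvNorm μ μ' := by ring

lemma eq_of_comp_eq_self (hη : ∀ x, ε • ν ≤ η x) (hε : 0 < ε) {μ μ' : Measure X}
    [IsProbabilityMeasure μ] [IsProbabilityMeasure μ'] (hμ : η ∘ₘ μ = μ) (hμ' : η ∘ₘ μ' = μ') :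
    μ = μ' := by
  have hle : tvNorm μ μ' ≤ (1 - ε) * tvNorm μ μ' := by
    simpa only [hμ, hμ'] using tvNorm_comp_le hη μ μ' (by simp)
  have hlt : 1 - ε < 1 := ENNReal.sub_lt_self ENNReal.one_ne_top one_ne_zero hε.ne'
  refine eq_of_tvNorm_eq_zero (by_contra fun h0 => ?_)
  have hfin : tvNorm μ μ' ≠ ∞ := ne_top_of_le_ne_top ENNReal.ofNat_ne_top (tvNorm_le_two μ μ')
  exact hle.not_gt (by simpa [mul_comm] using ENNReal.mul_lt_mul_right h0 hfin hlt)

lemma iterate_doeblinResidual_apply_univ (hη : ∀ x, ε • ν ≤ η x) (n : ℕ) :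
    (doeblinResidual η ε ν)^[n] ν Set.univ = (1 - ε) ^ n := by
  induction n with
  | zero => simp
  | succ n ih => rw [Function.iterate_succ_apply', doeblinResidual_apply_univ hη, ih, pow_succ']

lemma exists_comp_eq_self (hη : ∀ x, ε • ν ≤ η x) (hε : 0 < ε) :
    ∃ μ : Measure X, IsProbabilityMeasure μ ∧ η ∘ₘ μ = μ := by
  set R := doeblinResidual η ε ν
  have hε1 := le_one_of_forall_smul_le_apply hη
  have hgeom : ε * ∑' n : ℕ, (1 - ε) ^ n = 1 := by
    rw [ENNReal.tsum_geometric, ENNReal.sub_sub_cancel ENNReal.one_ne_top hε1,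
      ENNReal.mul_inv_cancel hε.ne' (ne_top_of_le_ne_top ENNReal.one_ne_top hε1)]
  have hmass (n : ℕ) : R^[n] ν Set.univ = (1 - ε) ^ n := iterate_doeblinResidual_apply_univ hη n
  have hstep (n : ℕ) : η ∘ₘ R^[n] ν = R^[n + 1] ν + (ε * (1 - ε) ^ n) • ν := by
    rw [comp_eq_doeblinResidual_add hη, Function.iterate_succ_apply', hmass]
  refine ⟨ε • Measure.sum (R^[·] ν), ⟨?_⟩, ?_⟩
  · simp only [Measure.smul_apply, Measure.sum_apply _ MeasurableSet.univ, smul_eq_mul, hmass,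
      hgeom]
  ext A hA
  rw [Measure.comp_smul, Measure.bind_sum _ _ η.aemeasurable]
  simp only [Measure.smul_apply, Measure.sum_apply _ hA, hstep, Measure.add_apply, smul_eq_mul]
  congr 1
  calc ∑' n, (R^[n + 1] ν A + ε * (1 - ε) ^ n * ν A)
      = ∑' n, R^[n + 1] ν A + ν A := by
        rw [ENNReal.tsum_add, ENNReal.tsum_mul_right, ENNReal.tsum_mul_left, hgeom, one_mul]
    _ = ∑' n, R^[n] ν A := by
        rw [add_comm]; exact (tsum_eq_zero_add' (f := (R^[·] ν A)) ENNReal.summable).symm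

end Doeblin

lemma smul_le_comp_self_apply {κ : Kernel X X} {K : Set X} {δ δ' : ℝ≥0∞} {ν : Measure X}
    (ha : ∀ x ∈ K, ∀ A, MeasurableSet A → δ * ν A ≤ κ x A) (hb : ∀ x, δ' ≤ κ x K) (x : X) :
    (δ * δ') • ν ≤ (κ ∘ₖ κ) x := by
  refine Measure.le_iff.mpr fun A hA => ?_
  calc ((δ * δ') • ν) A = δ * ν A * δ' := by rw [Measure.smul_apply, smul_eq_mul]; ring
    _ ≤ δ * ν A * κ x K := by gcongr; exact hb x
    _ = ∫⁻ _ in K, δ * ν A ∂κ x := (setLIntegral_const K _).symm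
    _ ≤ ∫⁻ y in K, κ y A ∂κ x := setLIntegral_mono (κ.measurable_coe hA) fun y hy => ha y hy A hA
    _ ≤ ∫⁻ y, κ y A ∂κ x := setLIntegral_le_lintegral K _
    _ = (κ ∘ₖ κ) x A := (Kernel.comp_apply' κ κ x hA).symm

lemma iterate_comp_two_mul (κ : Kernel X X) (k : ℕ) :
    (κ ∘ₘ ·)^[2 * k] = ((κ ∘ₖ κ) ∘ₘ ·)^[k] := by
  rw [Function.iterate_mul]
  congr 1
  funext m
  simp [Measure.comp_assoc]

end

theorem doeblin_exponential_convergence_general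
    {X : Type*} [MeasurableSpace X] (κ : Kernel X X) [IsMarkovKernel κ]
    (K : Set X)
    (δ : ℝ≥0∞) (hδ : 0 < δ) (νstar : Measure X) [IsProbabilityMeasure νstar]
    (ha : ∀ x ∈ K, ∀ A : Set X, MeasurableSet A → δ * νstar A ≤ κ x A)
    (δ' : ℝ≥0∞) (hδ' : 0 < δ')
    (hb : ∀ x : X, δ' ≤ κ x K) :
    ∃ μstar : Measure X, ∃ _ : IsProbabilityMeasure μstar,
      μstar.bind κ = μstar ∧
      (∀ ν : Measure X, IsProbabilityMeasure ν → ν.bind κ = ν → ν = μstar) ∧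
      ∀ (μ : Measure X) [IsProbabilityMeasure μ], ∀ n : ℕ,
        tvNorm ((fun m : Measure X => m.bind κ)^[n] μ) μstar
          ≤ 2 * (1 - δ * δ') ^ (n / 2) := by
  have hη := smul_le_comp_self_apply ha hb
  have hε : 0 < δ * δ' := ENNReal.mul_pos hδ.ne' hδ'.ne'
  obtain ⟨μstar, _, hfix⟩ := exists_comp_eq_self hη hε
  have hcomm : (κ ∘ₖ κ) ∘ₘ (κ ∘ₘ μstar) = κ ∘ₘ ((κ ∘ₖ κ) ∘ₘ μstar) := by
    simp only [← Measure.comp_assoc]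
  refine ⟨μstar, inferInstance, eq_of_comp_eq_self hη hε (by rw [hcomm, hfix]) hfix,
    fun ν _ hν => eq_of_comp_eq_self hη hε (by rw [← Measure.comp_assoc, hν, hν]) hfix,
    fun μ _ n => ?_⟩
  have hiter : (κ ∘ₘ ·)^[n] μ = ((κ ∘ₖ κ) ∘ₘ ·)^[n / 2] ((κ ∘ₘ ·)^[n % 2] μ) := by
    rw [← iterate_comp_two_mul, ← Function.iterate_add_apply, Nat.div_add_mod]
  calc tvNorm ((κ ∘ₘ ·)^[n] μ) μstar
      = tvNorm (((κ ∘ₖ κ) ∘ₘ ·)^[n / 2] ((κ ∘ₘ ·)^[n % 2] μ))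
          (((κ ∘ₖ κ) ∘ₘ ·)^[n / 2] μstar) := by
        simp only [hiter, Function.iterate_fixed (f := ((κ ∘ₖ κ) ∘ₘ ·)) hfix]
    _ ≤ (1 - δ * δ') ^ (n / 2) * tvNorm ((κ ∘ₘ ·)^[n % 2] μ) μstar :=
        tvNorm_iterate_comp_le hη _ _ _
    _ ≤ 2 * (1 - δ * δ') ^ (n / 2) := by
        rw [mul_comm]; gcongr; exact tvNorm_le_two _ _

theorem doeblin_exponential_convergence
    {X : Type*} [MeasurableSpace X] (κ : Kernel X X) [IsMarkovKernel κ]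
    (K : Set X) (hK : MeasurableSet K)
    (δ : ℝ≥0∞) (hδ : 0 < δ) (νstar : Measure X) [IsProbabilityMeasure νstar]
    (ha : ∀ x ∈ K, ∀ A : Set X, MeasurableSet A → δ * νstar A ≤ κ x A)
    (δ' : ℝ≥0∞) (hδ' : 0 < δ')
    (hb : ∀ x : X, δ' ≤ κ x K) :
    ∃ μstar : Measure X, ∃ _ : IsProbabilityMeasure μstar,
      μstar.bind κ = μstar ∧
      (∀ ν : Measure X, IsProbabilityMeasure ν → ν.bind κ = ν → ν = μstar) ∧
      ∀ (μ : Measure X) [IsProbabilityMeasure μ], ∀ n : ℕ,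
        tvNorm ((fun m : Measure X => m.bind κ)^[n] μ) μstar
          ≤ 2 * (1 - δ * δ') ^ (n / 2) :=
  doeblin_exponential_convergence_general κ K δ hδ νstar ha δ' hδ' hb
end

section
/- Let X be a Polish space with its Borel σ-algebra and let κ be a Markov kernel on X which is strong Feller. Suppose there exist m ≥ 1, a measurable set A which is accessible (κ(x, A) > 0 for every x ∈ X), a constant δ > 0 and a probability measure ν such that κ^m(y, B) ≥ δ·ν(B) for every y ∈ A and every measurable set B. Then every compact set C ⊆ X is (m+1)-small: there exist δ'' > 0 and a probability measure ν' such that κ^(m+1)(x, B) ≥ δ''·ν'(B) for every x ∈ C and every measurable set B. -/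
open MeasureTheory ProbabilityTheory

/-- The `m`-step transition kernel: `kpow κ m` is the `m`-fold composition of `κ`
with itself, so that `kpow κ (m+1) x D = ∫ kpow κ m y D κ(x, dy)`. -/
noncomputable def kpow {X : Type*} [MeasurableSpace X] (κ : Kernel X X) : ℕ → Kernel X X
  | 0 => Kernel.id
  | n + 1 => kpow κ n ∘ₖ κ

/-!
Strong Feller turns `x ↦ κ(x, A)` into a continuous function, which is positive since `A` is
accessible, hence bounded below by some `ε > 0` on the compact set `C`. Going one step into `A`
and then using the minorization on `A` gives `κ^(m+1)(x, B) ≥ ε δ ν(B)` for every `x ∈ C`.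
-/

open scoped ENNReal

namespace ProbabilityTheory.Kernel

variable {α β γ : Type*} [MeasurableSpace α] [MeasurableSpace β] [MeasurableSpace γ]

lemma mul_apply_le_comp_apply {κ : Kernel α β} {η : Kernel β γ} {A : Set β} {B : Set γ}
    (hB : MeasurableSet B) {c : ℝ≥0∞} (hc : ∀ b ∈ A, c ≤ η b B) (a : α) :
    c * κ a A ≤ (η ∘ₖ κ) a B :=
  calc c * κ a A = ∫⁻ _ in A, c ∂(κ a) := by rw [MeasureTheory.setLIntegral_const, mul_comm]
    _ ≤ ∫⁻ b in A, η b B ∂(κ a) := setLIntegral_mono (η.measurable_coe hB) hc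
    _ ≤ ∫⁻ b, η b B ∂(κ a) := setLIntegral_le_lintegral _ _
    _ = (η ∘ₖ κ) a B := (comp_apply' _ _ _ hB).symm

lemma continuous_measureReal_of_strongFeller [TopologicalSpace α] (κ : Kernel α β)
    (hFeller : ∀ φ : β → ℝ, Measurable φ → (∃ M, ∀ b, |φ b| ≤ M) →
      Continuous fun a => ∫ b, φ b ∂(κ a))
    {A : Set β} (hA : MeasurableSet A) :
    Continuous fun a => (κ a).real A := by
  have hbounded : ∀ b, |A.indicator (1 : β → ℝ) b| ≤ 1 := fun b => by
    by_cases hb : b ∈ A <;> simp [hb]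
  simpa [integral_indicator_one hA] using
    hFeller _ (measurable_one.indicator hA) ⟨1, hbounded⟩

end ProbabilityTheory.Kernel

open scoped ENNReal in
theorem compact_sets_are_small_of_accessible_small_set_general
    {X : Type*} [TopologicalSpace X] [MeasurableSpace X]
    (κ : Kernel X X) [IsMarkovKernel κ]
    (hFeller : ∀ φ : X → ℝ, Measurable φ → (∃ M, ∀ x, |φ x| ≤ M) →
      Continuous fun x => ∫ y, φ y ∂(κ x))
    (m : ℕ) (A : Set X) (hA : MeasurableSet A)
    (hacc : ∀ x : X, 0 < κ x A)
    (δ : ℝ≥0∞) (hδ : 0 < δ) (ν : Measure X) [IsProbabilityMeasure ν]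
    (hsmall : ∀ y ∈ A, ∀ B : Set X, MeasurableSet B → δ * ν B ≤ kpow κ m y B)
    (C : Set X) (hC : IsCompact C) :
    ∃ δ'' : ℝ≥0∞, 0 < δ'' ∧ ∃ ν' : Measure X, IsProbabilityMeasure ν' ∧
      ∀ x ∈ C, ∀ B : Set X, MeasurableSet B → δ'' * ν' B ≤ kpow κ (m + 1) x B := by
  obtain ⟨ε, hε, hεC⟩ := hC.exists_forall_le'
    (Kernel.continuous_measureReal_of_strongFeller κ hFeller hA).continuousOn
    fun x _ => ENNReal.toReal_pos (hacc x).ne' (measure_ne_top _ _)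
  refine ⟨δ * ENNReal.ofReal ε, by positivity, ν, inferInstance, fun x hx B hB => ?_⟩
  calc δ * ENNReal.ofReal ε * ν B = δ * ν B * ENNReal.ofReal ε := mul_right_comm _ _ _
    _ ≤ δ * ν B * κ x A := by
      gcongr
      rw [← ofReal_measureReal (measure_ne_top _ _)]
      exact ENNReal.ofReal_le_ofReal (hεC x hx)
    _ ≤ kpow κ (m + 1) x B := Kernel.mul_apply_le_comp_apply hB (fun y hy => hsmall y hy B hB) x

open scoped ENNReal in
theorem compact_sets_are_small_of_accessible_small_set
    {X : Type*} [TopologicalSpace X] [PolishSpace X] [MeasurableSpace X] [BorelSpace X]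
    (κ : Kernel X X) [IsMarkovKernel κ]
    (hFeller : ∀ φ : X → ℝ, Measurable φ → (∃ M, ∀ x, |φ x| ≤ M) →
      Continuous fun x => ∫ y, φ y ∂(κ x))
    (m : ℕ) (hm : 1 ≤ m) (A : Set X) (hA : MeasurableSet A)
    (hacc : ∀ x : X, 0 < κ x A)
    (δ : ℝ≥0∞) (hδ : 0 < δ) (ν : Measure X) [IsProbabilityMeasure ν]
    (hsmall : ∀ y ∈ A, ∀ B : Set X, MeasurableSet B → δ * ν B ≤ kpow κ m y B)
    (C : Set X) (hC : IsCompact C) :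
    ∃ δ'' : ℝ≥0∞, 0 < δ'' ∧ ∃ ν' : Measure X, IsProbabilityMeasure ν' ∧
      ∀ x ∈ C, ∀ B : Set X, MeasurableSet B → δ'' * ν' B ≤ kpow κ (m + 1) x B :=
  compact_sets_are_small_of_accessible_small_set_general κ hFeller m A hA hacc δ hδ ν hsmall C hC
end
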